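/- (Coefficient bound for the k-sender twirl, zero index.) Let d₀, …, d_{k−1} be reals with 2 ≤ d₀ ≤ d_i for all i, and let w: {0,1}^k → ℝ≥0 satisfy w_b / d_i ≤ w_{b⊕e_i} ≤ d_i · w_b for every b ∈ {0,1}^k and every i, where e_i flips the i-th bit. Suppose α: {0,1}^k → ℝ solves the linear system Σ_{a} K_{b,a} α_a = (∏_i d_i)² · w_b for all b, where K_{b,a} := (∏_i d_i) · ∏_i d_i^{¬(b_i⊕a_i)}. Then α_{0^k} ≤ ( ∏_{i=1}^{k−1} d_i² / ∏_{i=1}^{k−1}(d_i²−1) ) · w_{0^k} + Σ_{c ∈ {0,1}^k, c ≠ 0^k, c₀ = 0} ( ∏_{i≠0} d_i^{¬c_i + 1} / ∏_{i=1}^{k−1}(d_i²−1) ) · w_c. -/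

import Mathlib

open scoped Kronecker ComplexOrder
open MeasureTheory Matrix

noncomputable section

namespace QIT

section UnitaryTopology

variable (n : Type*) [Fintype n] [DecidableEq n]

instance : MeasurableSpace (Matrix.unitaryGroup n ℂ) := borel _
instance : BorelSpace (Matrix.unitaryGroup n ℂ) := ⟨rfl⟩

instance : IsTopologicalGroup (Matrix.unitaryGroup n ℂ) where
  continuous_mul := by
    apply Continuous.subtype_mk
    exact Continuous.matrix_mul (continuous_subtype_val.comp continuous_fst)
      (continuous_subtype_val.comp continuous_snd)
  continuous_inv := by
    have h : Continuous fun U : Matrix.unitaryGroup n ℂ => star U :=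
      Continuous.subtype_mk (continuous_star.comp continuous_subtype_val) _
    simpa [← Unitary.star_eq_inv] using h

instance : CompactSpace (Matrix.unitaryGroup n ℂ) := by
  apply isCompact_iff_compactSpace.mp
  have hclosed : IsClosed ((Matrix.unitaryGroup n ℂ : Set (Matrix n n ℂ))) := by
    have h1 : IsClosed {M : Matrix n n ℂ | star M * M = 1} :=
      isClosed_eq (Continuous.matrix_mul continuous_star continuous_id) continuous_const
    have h2 : IsClosed {M : Matrix n n ℂ | M * star M = 1} :=
      isClosed_eq (Continuous.matrix_mul continuous_id continuous_star) continuous_const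
    have heq : (Matrix.unitaryGroup n ℂ : Set (Matrix n n ℂ))
        = {M | star M * M = 1} ∩ {M | M * star M = 1} := by
      ext M; exact Unitary.mem_iff
    rw [heq]; exact h1.inter h2
  have hsub : (Matrix.unitaryGroup n ℂ : Set (Matrix n n ℂ)) ⊆
      ((Set.univ.pi fun _ : n => Set.univ.pi fun _ : n => Metric.closedBall (0 : ℂ) 1 :
        Set (n → n → ℂ)) : Set (Matrix n n ℂ)) := by
    intro U hU
    intro i _
    intro j _
    rw [Metric.mem_closedBall, dist_zero_right]
    exact entry_norm_bound_of_unitary hU i j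
  exact IsCompact.of_isClosed_subset
    (isCompact_univ_pi fun _ => isCompact_univ_pi fun _ => isCompact_closedBall _ _)
    hclosed hsub

/-- The Haar probability measure on the unitary group. -/
def haarU : Measure (Matrix.unitaryGroup n ℂ) :=
  Measure.haarMeasure ⟨⟨Set.univ, isCompact_univ⟩, by simp⟩

end UnitaryTopology


section Defs

/-- Entrywise (Bochner) integral of a matrix-valued function. -/
def mInt {G : Type*} [MeasurableSpace G] (mu : Measure G) {m : Type*}
    (f : G → Matrix m m ℂ) : Matrix m m ℂ :=
  fun i j => ∫ U, f U i j ∂mu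

/-- Partial trace over the first tensor factor. -/
def ptL {A B : Type*} [Fintype A] (M : Matrix (A × B) (A × B) ℂ) : Matrix B B ℂ :=
  fun i j => ∑ a, M (a, i) (a, j)

/-- Partial trace over the second tensor factor. -/
def ptR {A B : Type*} [Fintype B] (M : Matrix (A × B) (A × B) ℂ) : Matrix A A ℂ :=
  fun i j => ∑ b, M (i, b) (j, b)

/-- Extension `T ⊗ id` of a superoperator to an additional tensor factor. -/
def matExt {A E R : Type*} (T : Matrix A A ℂ → Matrix E E ℂ)
    (M : Matrix (A × R) (A × R) ℂ) : Matrix (E × R) (E × R) ℂ :=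
  fun p q => T (fun a b => M (a, p.2) (b, q.2)) p.1 q.1

/-- Linearity of a superoperator. -/
def IsLinMap {A E : Type*} (T : Matrix A A ℂ → Matrix E E ℂ) : Prop :=
  ∀ (c : ℂ) (M N : Matrix A A ℂ), T (c • M + N) = c • T M + T N

/-- Complete positivity of a superoperator: it is linear and all its extensions by
finite-dimensional identities preserve positive semidefiniteness. -/
def IsCPMap {A E : Type*} [Fintype A] [Fintype E] (T : Matrix A A ℂ → Matrix E E ℂ) : Prop :=
  IsLinMap T ∧ ∀ (n : ℕ) (M : Matrix (A × Fin n) (A × Fin n) ℂ),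
    M.PosSemidef → (matExt T M).PosSemidef

/-- Trace preservation. -/
def IsTPMap {A E : Type*} [Fintype A] [Fintype E] (T : Matrix A A ℂ → Matrix E E ℂ) : Prop :=
  ∀ M : Matrix A A ℂ, (T M).trace = M.trace

/-- Spectral (Moore–Penrose) real power of a Hermitian matrix: the eigenvalue `λ` is mapped to
`λ ^ r` if `λ ≠ 0`, and to `0` otherwise.  Junk value `0` on non-Hermitian input. -/
def mpow {n : Type*} [Fintype n] [DecidableEq n] (M : Matrix n n ℂ) (r : ℝ) : Matrix n n ℂ :=
  if h : M.IsHermitian then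
    (h.eigenvectorUnitary : Matrix n n ℂ) *
      Matrix.diagonal (fun i =>
        Complex.ofReal (if h.eigenvalues i = 0 then (0 : ℝ) else h.eigenvalues i ^ r)) *
      star (h.eigenvectorUnitary : Matrix n n ℂ)
  else 0

/-- `ρ_δ`: the matrix obtained from a Hermitian matrix by zeroing out a maximal set of
smallest eigenvalues whose sum is at most `δ` (ties between equal eigenvalues broken by a
fixed enumeration of the index type).  Junk value `0` on non-Hermitian input. -/
def dTrunc {n : Type*} [Fintype n] [DecidableEq n] (M : Matrix n n ℂ) (δ : ℝ) :
    Matrix n n ℂ :=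
  if h : M.IsHermitian then
    (h.eigenvectorUnitary : Matrix n n ℂ) *
      Matrix.diagonal (fun i =>
        if (∑ j ∈ Finset.univ.filter (fun j =>
              h.eigenvalues j < h.eigenvalues i ∨
                (h.eigenvalues j = h.eigenvalues i ∧
                  Fintype.equivFin n j ≤ Fintype.equivFin n i)), h.eigenvalues j) ≤ δ
        then (0 : ℂ) else (h.eigenvalues i : ℂ)) *
      star (h.eigenvectorUnitary : Matrix n n ℂ)
  else 0

/-- Squared Schatten 2-norm `‖M‖₂² = Tr[MᴴM]`. -/
def sn2sq {n : Type*} [Fintype n] (M : Matrix n n ℂ) : ℝ := (Matrix.trace (Mᴴ * M)).re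

/-- Trace norm `‖M‖₁ = Tr √(MᴴM)`. -/
def traceNorm {n : Type*} [Fintype n] [DecidableEq n] (M : Matrix n n ℂ) : ℝ :=
  (Matrix.trace (mpow (Mᴴ * M) (1 / 2))).re

/-- The conditioned state `(I ⊗ (ρ^B_δ)^{-1/4}) ρ^{AB} (I ⊗ (ρ^B_δ)^{-1/4})`. -/
def tildeCond {A B : Type*} [Fintype A] [DecidableEq A] [Fintype B] [DecidableEq B]
    (ρ : Matrix (A × B) (A × B) ℂ) (δ : ℝ) : Matrix (A × B) (A × B) ℂ :=
  ((1 : Matrix A A ℂ) ⊗ₖ mpow (dTrunc (ptL ρ) δ) (-(1 / 4))) * ρ *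
    ((1 : Matrix A A ℂ) ⊗ₖ mpow (dTrunc (ptL ρ) δ) (-(1 / 4)))

/-- The δ-tilde conditional 2-entropy `H̃_{2,δ}(A|B)_ρ` of a state on `A ⊗ B`
(conditioning on the second factor). -/
def tildeH2 {A B : Type*} [Fintype A] [DecidableEq A] [Fintype B] [DecidableEq B]
    (ρ : Matrix (A × B) (A × B) ℂ) (δ : ℝ) : ℝ :=
  - Real.logb 2 ((Matrix.trace (tildeCond ρ δ * tildeCond ρ δ)).re)

/-- The unconditional tilde 2-entropy `H̃_2(A)_σ = -log Tr[σ²]`. -/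
def h2un {A : Type*} [Fintype A] (σ : Matrix A A ℂ) : ℝ :=
  - Real.logb 2 ((Matrix.trace (σ * σ)).re)

/-- The max entropy `H_max(A)_σ = 2 log Tr[√σ]`. -/
def hMax {A : Type*} [Fintype A] [DecidableEq A] (σ : Matrix A A ℂ) : ℝ :=
  2 * Real.logb 2 ((Matrix.trace (mpow σ (1 / 2))).re)

/-- The maximally entangled state `Φ^{AA'}`. -/
def maxEnt (A : Type*) [Fintype A] [DecidableEq A] : Matrix (A × A) (A × A) ℂ :=
  fun p q => if p.1 = p.2 ∧ q.1 = q.2 then (Fintype.card A : ℂ)⁻¹ else 0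

/-- The swap operator `F^{AA'}`. -/
def swapOp (A : Type*) [DecidableEq A] : Matrix (A × A) (A × A) ℂ :=
  fun p q => if p.1 = q.2 ∧ p.2 = q.1 then 1 else 0

/-- The Choi state of a superoperator, on `A ⊗ E`. -/
def choi {A E : Type*} [Fintype A] [DecidableEq A]
    (T : Matrix A A ℂ → Matrix E E ℂ) : Matrix (A × E) (A × E) ℂ :=
  fun p q => (Fintype.card A : ℂ)⁻¹ * T (Matrix.single p.1 q.1 1) p.2 q.2

/-- A (mixed) quantum state. -/
def IsState {A : Type*} [Fintype A] (ρ : Matrix A A ℂ) : Prop :=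
  ρ.PosSemidef ∧ ρ.trace = 1

/-- A pure quantum state (rank-one projection). -/
def IsPureState {A : Type*} [Fintype A] (ψ : Matrix A A ℂ) : Prop :=
  ψ.PosSemidef ∧ ψ * ψ = ψ ∧ ψ.trace = 1


/-- The Haar measure on the unitary group is a probability measure. -/
instance {n : Type*} [Fintype n] [DecidableEq n] : IsProbabilityMeasure (haarU n) :=
  ⟨Measure.haarMeasure_self⟩

/-- marginal over the middle factor: `((X × Y) × Z) ↦ (X × Z)`. -/
def m13 {X Y Z : Type*} [Fintype Y] (M : Matrix ((X × Y) × Z) ((X × Y) × Z) ℂ) :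
    Matrix (X × Z) (X × Z) ℂ :=
  fun p q => ∑ y, M ((p.1, y), p.2) ((q.1, y), q.2)

/-- marginal over the first of three factors: `((X × Y) × Z) ↦ (Y × Z)`. -/
def m23 {X Y Z : Type*} [Fintype X] (M : Matrix ((X × Y) × Z) ((X × Y) × Z) ℂ) :
    Matrix (Y × Z) (Y × Z) ℂ :=
  fun p q => ∑ x, M ((x, p.1), p.2) ((x, q.1), q.2)

/-- marginal over the first component of the second factor:
`(X × (Y × Z)) ↦ (X × Z)`. -/
def m2of2 {X Y Z : Type*} [Fintype Y] (M : Matrix (X × (Y × Z)) (X × (Y × Z)) ℂ) :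
    Matrix (X × Z) (X × Z) ℂ :=
  fun p q => ∑ y, M (p.1, (y, p.2)) (q.1, (y, q.2))

/-- `(F^{AA'})^b`: the swap operator if `b = true`, the identity otherwise. -/
def swapPow (A : Type*) [Fintype A] [DecidableEq A] (b : Bool) : Matrix (A × A) (A × A) ℂ :=
  if b then swapOp A else 1

/-- `I_S ⊗ V` for a rectangular matrix `V`. -/
def idTensor {S α β : Type*} [DecidableEq S] (V : Matrix α β ℂ) :
    Matrix (S × α) (S × β) ℂ := fun p q => if p.1 = q.1 then V p.2 q.2 else 0

/-- `Ω^{A'A''} ⊗ Δ^{B'B''}` rearranged as an operator on `(A''⊗B'') ⊗ (A'⊗B')`. -/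
def pairState {A A' B B' : Type*} (Ω : Matrix (A' × A) (A' × A) ℂ)
    (Δ : Matrix (B' × B) (B' × B) ℂ) :
    Matrix ((A × B) × (A' × B')) ((A × B) × (A' × B')) ℂ :=
  fun p q => Ω (p.2.1, p.1.1) (q.2.1, q.1.1) * Δ (p.2.2, p.1.2) (q.2.2, q.1.2)

/-- interleave two bipartite operators on `A⊗X` and `B⊗Y` as an operator on
`(A⊗B) ⊗ (X⊗Y)`. -/
def arrange2 {A B X Y : Type*} (M : Matrix (A × X) (A × X) ℂ) (N : Matrix (B × Y) (B × Y) ℂ) :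
    Matrix ((A × B) × (X × Y)) ((A × B) × (X × Y)) ℂ :=
  fun p q => M (p.1.1, p.2.1) (q.1.1, q.2.1) * N (p.1.2, p.2.2) (q.1.2, q.2.2)

/-- conjugate the first factor of a bipartite operator by a rectangular matrix `U : A → A'`. -/
def encApply {A A' X : Type*} [Fintype A] (U : Matrix A' A ℂ) (M : Matrix (A × X) (A × X) ℂ) :
    Matrix (A' × X) (A' × X) ℂ :=
  fun p q => ∑ a, ∑ a', U p.1 a * M (a, p.2) (a', q.2) * star (U q.1 a')

section Pi

variable {k : ℕ} {a : Fin k → Type*} [∀ i, Fintype (a i)] [∀ i, DecidableEq (a i)]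

/-- Tensor product of `k` matrices. -/
def piKron (U : ∀ i, Matrix (a i) (a i) ℂ) : Matrix (∀ i, a i) (∀ i, a i) ℂ :=
  fun f g => ∏ i, U i (f i) (g i)

/-- merge assignments on the `true` and `false` fibers of a bit string into a full assignment. -/
def bmerge (b : Fin k → Bool) (f : (i : {i // b i = true}) → a i.1)
    (g : (i : {i // b i = false}) → a i.1) (i : Fin k) : a i :=
  if h : b i = true then f ⟨i, h⟩ else g ⟨i, by simpa using h⟩

/-- marginal of an operator on `(⊗ᵢ Aᵢ) ⊗ E` on the subsystem
`(⊗_{i : bᵢ = 1} Aᵢ) ⊗ E` selected by a bit string `b`. -/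
def margB {E : Type*} (b : Fin k → Bool)
    (M : Matrix ((∀ i, a i) × E) ((∀ i, a i) × E) ℂ) :
    Matrix (((i : {i // b i = true}) → a i.1) × E) (((i : {i // b i = true}) → a i.1) × E) ℂ :=
  fun p q => ∑ g : (i : {i // b i = false}) → a i.1,
    M (bmerge b p.1 g, p.2) (bmerge b q.1 g, q.2)

/-- `⊗ᵢ (F^{AᵢAᵢ'})^{bᵢ}` as an operator on `(⊗ᵢAᵢ) ⊗ (⊗ᵢAᵢ')`. -/
def swapProd (b : Fin k → Bool) :
    Matrix ((∀ i, a i) × (∀ i, a i)) ((∀ i, a i) × (∀ i, a i)) ℂ :=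
  fun p q => ∏ i, if b i
    then (if p.1 i = q.2 i ∧ p.2 i = q.1 i then (1 : ℂ) else 0)
    else (if p.1 i = q.1 i ∧ p.2 i = q.2 i then (1 : ℂ) else 0)

end Pi

/-- Tensor product `S ⊗ T` of two superoperators. -/
def tensorSup {α β α' β' : Type*} [Fintype α] [DecidableEq α] [Fintype α'] [DecidableEq α']
    (S : Matrix α α ℂ → Matrix β β ℂ) (T : Matrix α' α' ℂ → Matrix β' β' ℂ)
    (M : Matrix (α × α') (α × α') ℂ) : Matrix (β × β') (β × β') ℂ :=
  fun p q => ∑ x : α, ∑ y : α, ∑ x' : α', ∑ y' : α',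
    M (x, x') (y, y') * S (Matrix.single x y 1) p.1 q.1 *
      T (Matrix.single x' y' 1) p.2 q.2

/-- Hilbert–Schmidt adjoint of a superoperator. -/
def hsAdj {A E : Type*} [Fintype A] [DecidableEq A] [Fintype E]
    (T : Matrix A A ℂ → Matrix E E ℂ) (Y : Matrix E E ℂ) : Matrix A A ℂ :=
  fun x y => star (Matrix.trace (Yᴴ * T (Matrix.single x y 1)))

end Defs

end QIT

/-! The kernel is the tensor product over `i` of the blocks `M_{x,y} = d_i · (if x = y then d_i else 1)`,
so the row of its inverse at `0^k` is a product of per-coordinate rows, and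
`α_{0^k} = ∑_c (∏_i r_i(c_i)) w_c` with `r_i(0) = d_i²/(d_i²-1)`, `r_i(1) = -d_i/(d_i²-1)`.
Grouping `c` with `c ⊕ e_0`, the two terms combine to `(∏_{i≠0} r_i(c_i)) · z` where
`z = (d_0² w_c - d_0 w_{c⊕e_0})/(d_0²-1)`; the ratio bounds on `w` put `z` in `[0, w_c]`, and the
product is at most its absolute value, which is the coefficient of `w_c` on the right. -/

open Finset

lemma sum_mul_eq_mul_apply_of_row {β R : Type*} [Fintype β] [DecidableEq β] [CommSemiring R]
    {K : β → β → R} {v x y : β → R} {a₀ : β} {s : R}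
    (hv : ∀ a, ∑ b, v b * K b a = if a = a₀ then s else 0)
    (hKx : ∀ b, ∑ a, K b a * x a = y b) : ∑ b, v b * y b = s * x a₀ := by
  calc ∑ b, v b * y b = ∑ a, (∑ b, v b * K b a) * x a := by
        simp_rw [← hKx, mul_sum, sum_mul, mul_assoc]
        exact sum_comm
    _ = s * x a₀ := by simp [hv]

lemma sum_filter_eq_add_sum_filter_ne {β M : Type*} [Fintype β] [DecidableEq β]
    [AddCommMonoid M] (p : β → Prop) [DecidablePred p] (f : β → M) {a₀ : β} (ha₀ : p a₀) :
    ∑ a ∈ univ.filter p, f a = f a₀ + ∑ a ∈ univ.filter (fun a => a ≠ a₀ ∧ p a), f a := by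
  rw [← add_sum_erase _ _ (mem_filter.2 ⟨mem_univ a₀, ha₀⟩)]
  congr 2
  ext a
  simp [and_comm]

/-- `t² (M⁻¹)_{false,x}` for the block `M_{x,y} = t · (if x = y then t else 1)`; the factor `t²`
absorbs the `(∏ i, d i)²` of the linear system. -/
def kernelInvRow (t : ℝ) (x : Bool) : ℝ := (if x then -t else t ^ 2) / (t ^ 2 - 1)

lemma sum_kernelInvRow_mul {t : ℝ} (ht : t ^ 2 ≠ 1) (y : Bool) :
    ∑ x, kernelInvRow t x * (t * if x = y then t else 1) = if y = false then t ^ 2 else 0 := by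
  have ht' : t ^ 2 - 1 ≠ 0 := sub_ne_zero.2 ht
  cases y <;> simp only [Fintype.sum_bool, kernelInvRow, Bool.true_eq_false, Bool.false_eq_true,
    ↓reduceIte] <;> field_simp <;> ring

lemma abs_kernelInvRow {t : ℝ} (ht : 1 < t) (x : Bool) :
    |kernelInvRow t x| = (if x then t else t ^ 2) / (t ^ 2 - 1) := by
  have ht' : 0 < t ^ 2 - 1 := by nlinarith
  cases x <;> simp [kernelInvRow, abs_div, abs_of_pos ht', abs_of_pos (by linarith : 0 < t)]

lemma kernelInvRow_mul_add_le {t x y : ℝ} (p : ℝ) (ht : 1 < t) (hxy : x / t ≤ y)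
    (hyx : y ≤ t * x) :
    kernelInvRow t false * p * x + kernelInvRow t true * p * y ≤ |p| * x := by
  have ht' : 0 < t ^ 2 - 1 := by nlinarith
  have hxy' : x ≤ t * y := by rwa [div_le_iff₀' (by linarith)] at hxy
  set z := (t ^ 2 * x - t * y) / (t ^ 2 - 1)
  have hz : kernelInvRow t false * p * x + kernelInvRow t true * p * y = p * z := by
    simp only [kernelInvRow, Bool.false_eq_true, ↓reduceIte, z]
    ring
  have hz0 : 0 ≤ z := div_nonneg (by nlinarith) ht'.le
  have hzx : z ≤ x := by rw [div_le_iff₀ ht']; nlinarith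
  rw [hz]
  calc p * z ≤ |p| * z := mul_le_mul_of_nonneg_right (le_abs_self p) hz0
    _ ≤ |p| * x := mul_le_mul_of_nonneg_left hzx (abs_nonneg p)

section TwirlKernel

variable {ι : Type*} {d : ι → ℝ}

lemma prod_abs_kernelInvRow (hd : ∀ i, 1 < d i) (s : Finset ι) (c : ι → Bool) :
    ∏ i ∈ s, |kernelInvRow (d i) (c i)|
      = (∏ i ∈ s, if c i then d i else d i ^ 2) / ∏ i ∈ s, (d i ^ 2 - 1) := by
  rw [← prod_div_distrib]
  exact prod_congr rfl fun i _ => abs_kernelInvRow (hd i) (c i)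

variable [Fintype ι] [DecidableEq ι]

lemma sum_eq_sum_filter_add_update {M : Type*} [AddCommMonoid M] (f : (ι → Bool) → M) (j : ι) :
    ∑ c, f c = ∑ c ∈ univ.filter (fun c : ι → Bool => c j = false),
      (f c + f (Function.update c j true)) := by
  rw [sum_add_distrib, ← sum_filter_add_sum_filter_not univ (fun c : ι → Bool => c j = false) f]
  congr 1
  refine sum_nbij' (fun c => Function.update c j false) (fun c => Function.update c j true)
    ?_ ?_ ?_ ?_ ?_ <;> intro c hc <;> simp only [mem_filter, mem_univ, true_and,
      Bool.not_eq_false] at hc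
  · simp
  · simp
  all_goals rw [Function.update_idem, ← hc, Function.update_eq_self]

lemma prod_apply_update {β R : Type*} [CommMonoid R] (f : ι → β → R) (c : ι → β) (j : ι)
    (x : β) :
    ∏ i, f i (Function.update c j x i) = f j x * ∏ i ∈ univ.erase j, f i (c i) := by
  rw [← mul_prod_erase univ _ (mem_univ j), Function.update_self]
  congr 1
  exact prod_congr rfl fun i hi => by rw [Function.update_of_ne (ne_of_mem_erase hi)]

lemma sum_prod_kernelInvRow_mul_kernel (hd : ∀ i, d i ^ 2 ≠ 1) (a : ι → Bool) :
    ∑ b : ι → Bool, (∏ i, kernelInvRow (d i) (b i)) *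
        ((∏ i, d i) * ∏ i, if b i = a i then d i else 1)
      = if a = (fun _ => false) then (∏ i, d i) ^ 2 else 0 := by
  calc _ = ∑ b : ι → Bool,
        ∏ i, kernelInvRow (d i) (b i) * (d i * if b i = a i then d i else 1) := by
          simp_rw [prod_mul_distrib]
    _ = ∏ i, ∑ x, kernelInvRow (d i) x * (d i * if x = a i then d i else 1) :=
          (Fintype.prod_sum fun i x =>
            kernelInvRow (d i) x * (d i * if x = a i then d i else 1)).symm
    _ = ∏ i, if a i = false then d i ^ 2 else 0 := by simp_rw [sum_kernelInvRow_mul (hd _)]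
    _ = _ := by simp only [Fintype.prod_ite_zero, prod_pow, funext_iff]

lemma apply_false_eq_sum_of_kernel (hd0 : ∀ i, d i ≠ 0) (hd : ∀ i, d i ^ 2 ≠ 1)
    {w α : (ι → Bool) → ℝ}
    (hα : ∀ b : ι → Bool,
      ∑ a : ι → Bool, ((∏ i, d i) * ∏ i, if b i = a i then d i else 1) * α a
        = (∏ i, d i) ^ 2 * w b) :
    α (fun _ => false) = ∑ c, (∏ i, kernelInvRow (d i) (c i)) * w c := by
  have h := sum_mul_eq_mul_apply_of_row (sum_prod_kernelInvRow_mul_kernel hd) hα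
  simp_rw [mul_left_comm _ ((∏ i, d i) ^ 2), ← mul_sum] at h
  exact (mul_left_cancel₀ (pow_ne_zero 2 (prod_ne_zero_iff.2 fun i _ => hd0 i)) h).symm

lemma kernelInvRow_pair_le (hd : ∀ i, 1 < d i) {w : (ι → Bool) → ℝ} {c : ι → Bool} {j : ι}
    (hc : c j = false) (hlo : w c / d j ≤ w (Function.update c j true))
    (hhi : w (Function.update c j true) ≤ d j * w c) :
    (∏ i, kernelInvRow (d i) (c i)) * w c
        + (∏ i, kernelInvRow (d i) (Function.update c j true i)) * w (Function.update c j true)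
      ≤ (∏ i ∈ univ.erase j, |kernelInvRow (d i) (c i)|) * w c := by
  rw [prod_apply_update (fun i => kernelInvRow (d i)), ← mul_prod_erase univ _ (mem_univ j), hc,
    ← abs_prod]
  exact kernelInvRow_mul_add_le _ (hd j) hlo hhi

end TwirlKernel

theorem ksender_twirl_coeff_bound_zero_general {k : ℕ} (hk : 0 < k) (d : Fin k → ℝ)
    (hd0 : 2 ≤ d ⟨0, hk⟩) (hd : ∀ i, d ⟨0, hk⟩ ≤ d i)
    (w : (Fin k → Bool) → ℝ)
    (hw : ∀ (b : Fin k → Bool) (i : Fin k),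
      w b / d i ≤ w (Function.update b i (!b i)) ∧
        w (Function.update b i (!b i)) ≤ d i * w b)
    (α : (Fin k → Bool) → ℝ)
    (hα : ∀ b : Fin k → Bool,
      ∑ a : Fin k → Bool, ((∏ i, d i) * ∏ i, if b i = a i then d i else 1) * α a
        = (∏ i, d i) ^ 2 * w b) :
    α (fun _ => false) ≤
      ((∏ i ∈ Finset.univ.erase ⟨0, hk⟩, d i ^ 2) /
          ∏ i ∈ Finset.univ.erase ⟨0, hk⟩, (d i ^ 2 - 1)) * w (fun _ => false)
      + ∑ c ∈ (Finset.univ.filter fun c : Fin k → Bool =>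
          c ≠ (fun _ => false) ∧ c ⟨0, hk⟩ = false),
          ((∏ i ∈ Finset.univ.erase ⟨0, hk⟩, if c i then d i else d i ^ 2) /
            ∏ i ∈ Finset.univ.erase ⟨0, hk⟩, (d i ^ 2 - 1)) * w c := by
  set i₀ : Fin k := ⟨0, hk⟩
  have hd1 : ∀ i, 1 < d i := fun i => by linarith [hd i]
  calc α (fun _ => false)
      = ∑ c, (∏ i, kernelInvRow (d i) (c i)) * w c :=
        apply_false_eq_sum_of_kernel (fun i => (zero_lt_one.trans (hd1 i)).ne')
          (fun i => by nlinarith [hd1 i]) hα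
    _ = ∑ c ∈ univ.filter (fun c : Fin k → Bool => c i₀ = false),
          ((∏ i, kernelInvRow (d i) (c i)) * w c
            + (∏ i, kernelInvRow (d i) (Function.update c i₀ true i))
              * w (Function.update c i₀ true)) := sum_eq_sum_filter_add_update _ i₀
    _ ≤ ∑ c ∈ univ.filter (fun c : Fin k → Bool => c i₀ = false),
          (∏ i ∈ univ.erase i₀, |kernelInvRow (d i) (c i)|) * w c := by
        refine sum_le_sum fun c hc => ?_
        have hc : c i₀ = false := (mem_filter.1 hc).2
        obtain ⟨hlo, hhi⟩ := hw c i₀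
        rw [hc, Bool.not_false] at hlo hhi
        exact kernelInvRow_pair_le hd1 hc hlo hhi
    _ = _ := by
        rw [sum_filter_eq_add_sum_filter_ne (fun c : Fin k → Bool => c i₀ = false) _
          (a₀ := fun _ => false) rfl]
        simp_rw [prod_abs_kernelInvRow hd1]
        simp

/-- Coefficient bound for the k-sender twirl, zero index: under the same
assumptions as for the nonzero case, with `2 ≤ d₀ ≤ dᵢ` for all `i`,
`α_{0^k} ≤ (∏_{i≠0} dᵢ²/∏_{i≠0}(dᵢ²−1))·w_{0^k}
  + Σ_{c≠0^k, c₀=0} (∏_{i≠0} dᵢ^{¬cᵢ+1}/∏_{i≠0}(dᵢ²−1))·w_c`. -/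
theorem ksender_twirl_coeff_bound_zero {k : ℕ} (hk : 0 < k) (d : Fin k → ℝ)
    (hd0 : 2 ≤ d ⟨0, hk⟩) (hd : ∀ i, d ⟨0, hk⟩ ≤ d i)
    (w : (Fin k → Bool) → ℝ) (hw0 : ∀ b, 0 ≤ w b)
    (hw : ∀ (b : Fin k → Bool) (i : Fin k),
      w b / d i ≤ w (Function.update b i (!b i)) ∧
        w (Function.update b i (!b i)) ≤ d i * w b)
    (α : (Fin k → Bool) → ℝ)
    (hα : ∀ b : Fin k → Bool,
      ∑ a : Fin k → Bool, ((∏ i, d i) * ∏ i, if b i = a i then d i else 1) * α a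
        = (∏ i, d i) ^ 2 * w b) :
    α (fun _ => false) ≤
      ((∏ i ∈ Finset.univ.erase ⟨0, hk⟩, d i ^ 2) /
          ∏ i ∈ Finset.univ.erase ⟨0, hk⟩, (d i ^ 2 - 1)) * w (fun _ => false)
      + ∑ c ∈ (Finset.univ.filter fun c : Fin k → Bool =>
          c ≠ (fun _ => false) ∧ c ⟨0, hk⟩ = false),
          ((∏ i ∈ Finset.univ.erase ⟨0, hk⟩, if c i then d i else d i ^ 2) /
            ∏ i ∈ Finset.univ.erase ⟨0, hk⟩, (d i ^ 2 - 1)) * w c :=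
  ksender_twirl_coeff_bound_zero_general hk d hd0 hd w hw α hα
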